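/- arXiv:2310.19927 — 2 statements merged into one kernel-verified Lean document; each statement's English description precedes it below -/
import Mathlib

section
/- Under the model rollout setup, for every i ≥ 0 and every θ ∈ Θ, the map ŝ_i : Θ → S is differentiable and its Fréchet derivative satisfies ‖D_θ ŝ_i(θ)‖ ≤ L_f̂ · L_θ · ∑_{j=0}^{i−1} M^j, where M = L_f̂ · (1 + L_π). In particular the bound is 0 for i = 0. -/
open Finset

/-- Model rollout: states `ŝ_i : Θ → S` generated from the constant initial state `s₀`
by `ŝ₀(θ) = s₀`, `ŝ_{i+1}(θ) = f(ŝ_i(θ), π(θ, ŝ_i(θ)))`. -/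
def sHat {Θ S A : Type*} (π : Θ × S → A) (f : S × A → S) (s₀ : S) : ℕ → Θ → S
  | 0 => fun _ => s₀
  | (i + 1) => fun θ => f (sHat π f s₀ i θ, π (θ, sHat π f s₀ i θ))

/-- Model rollout: actions `â_i(θ) = π(θ, ŝ_i(θ))`. -/
def aHat {Θ S A : Type*} (π : Θ × S → A) (f : S × A → S) (s₀ : S) (i : ℕ) : Θ → A :=
  fun θ => π (θ, sHat π f s₀ i θ)

/-- `K̂(i) = (1 + L_π) · L_f̂ · L_θ · ∑_{j=0}^{i−1} (L_f̂ (1 + L_π))^j + L_θ`. -/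
noncomputable def Khat (Lπ Lf Lθ : ℝ) (i : ℕ) : ℝ :=
  (1 + Lπ) * Lf * Lθ * ∑ j ∈ Finset.range i, (Lf * (1 + Lπ)) ^ j + Lθ

/-
By the chain rule, `D ŝ_{i+1} = D_s f̂ ∘ D ŝ_i + D_a f̂ ∘ (D_θ π + D_s π ∘ D ŝ_i)`, so the norms
obey `‖D ŝ_{i+1}‖ ≤ L_f̂ L_θ + M ‖D ŝ_i‖` with `M = L_f̂ (1 + L_π)`, starting from `D ŝ₀ = 0`.
Unrolling this affine recursion gives the geometric sum.
-/

namespace ContinuousLinearMap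

variable {𝕜 X E F G : Type*} [NontriviallyNormedField 𝕜]
  [SeminormedAddCommGroup X] [NormedSpace 𝕜 X] [SeminormedAddCommGroup E] [NormedSpace 𝕜 E]
  [SeminormedAddCommGroup F] [NormedSpace 𝕜 F] [SeminormedAddCommGroup G] [NormedSpace 𝕜 G]

theorem comp_prod_eq_add (D : E × F →L[𝕜] G) (u : X →L[𝕜] E) (v : X →L[𝕜] F) :
    D.comp (u.prod v) = (D.comp (inl 𝕜 E F)).comp u + (D.comp (inr 𝕜 E F)).comp v := by
  ext x
  simp [← map_add]

theorem norm_comp_prod_le (D : E × F →L[𝕜] G) (u : X →L[𝕜] E) (v : X →L[𝕜] F) :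
    ‖D.comp (u.prod v)‖ ≤ ‖D.comp (inl 𝕜 E F)‖ * ‖u‖ + ‖D.comp (inr 𝕜 E F)‖ * ‖v‖ := by
  rw [comp_prod_eq_add]
  exact (norm_add_le _ _).trans (add_le_add (opNorm_comp_le _ _) (opNorm_comp_le _ _))

end ContinuousLinearMap

open ContinuousLinearMap

section PartialDerivatives

variable {𝕜 E F G : Type*} [NontriviallyNormedField 𝕜]
  [NormedAddCommGroup E] [NormedSpace 𝕜 E] [NormedAddCommGroup F] [NormedSpace 𝕜 F]
  [NormedAddCommGroup G] [NormedSpace 𝕜 G] {f : E × F → G} {D : E × F →L[𝕜] G} {p : E × F}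

theorem HasFDerivAt.fderiv_prodMk_left (h : HasFDerivAt f D p) :
    fderiv 𝕜 (fun x => f (x, p.2)) p.1 = D.comp (inl 𝕜 E F) :=
  (h.comp p.1 (hasFDerivAt_prodMk_left p.1 p.2)).fderiv

theorem HasFDerivAt.fderiv_prodMk_right (h : HasFDerivAt f D p) :
    fderiv 𝕜 (fun y => f (p.1, y)) p.2 = D.comp (inr 𝕜 E F) :=
  (h.comp p.2 (hasFDerivAt_prodMk_right p.1 p.2)).fderiv

end PartialDerivatives

section RolloutStep

variable {𝕜 Θ S A : Type*} [NontriviallyNormedField 𝕜]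
  [NormedAddCommGroup Θ] [NormedSpace 𝕜 Θ] [NormedAddCommGroup S] [NormedSpace 𝕜 S]
  [NormedAddCommGroup A] [NormedSpace 𝕜 A]

theorem differentiableAt_and_norm_fderiv_rolloutStep_le {π : Θ × S → A} {f : S × A → S} {g : Θ → S} {θ : Θ}
    {Lθ Lπ Lf : ℝ} (hg : DifferentiableAt 𝕜 g θ)
    (hπ : DifferentiableAt 𝕜 π (θ, g θ))
    (hπθ : ‖fderiv 𝕜 (fun θ' => π (θ', g θ)) θ‖ ≤ Lθ)
    (hπs : ‖fderiv 𝕜 (fun s => π (θ, s)) (g θ)‖ ≤ Lπ)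
    (hf : DifferentiableAt 𝕜 f (g θ, π (θ, g θ)))
    (hfs : ‖fderiv 𝕜 (fun s => f (s, π (θ, g θ))) (g θ)‖ ≤ Lf)
    (hfa : ‖fderiv 𝕜 (fun a => f (g θ, a)) (π (θ, g θ))‖ ≤ Lf) :
    DifferentiableAt 𝕜 (fun θ' => f (g θ', π (θ', g θ'))) θ ∧
      ‖fderiv 𝕜 (fun θ' => f (g θ', π (θ', g θ'))) θ‖ ≤
        Lf * Lθ + Lf * (1 + Lπ) * ‖fderiv 𝕜 g θ‖ := by
  have hπ' := hπ.hasFDerivAt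
  have hf' := hf.hasFDerivAt
  have hLf : 0 ≤ Lf := (norm_nonneg _).trans hfs
  set Dg := fderiv 𝕜 g θ
  have haction : HasFDerivAt (fun θ' => π (θ', g θ')) _ θ :=
    hπ'.comp θ ((hasFDerivAt_id θ).prodMk hg.hasFDerivAt)
  have hstep : HasFDerivAt (fun θ' => f (g θ', π (θ', g θ'))) _ θ :=
    hf'.comp θ (hg.hasFDerivAt.prodMk haction)
  refine ⟨hstep.differentiableAt, ?_⟩
  have haction_le : ‖(fderiv 𝕜 π (θ, g θ)).comp ((ContinuousLinearMap.id 𝕜 Θ).prod Dg)‖ ≤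
      Lθ + Lπ * ‖Dg‖ := by
    refine (norm_comp_prod_le _ _ _).trans (add_le_add ?_ ?_)
    · rw [← hπ'.fderiv_prodMk_left]
      exact (mul_le_of_le_one_right (norm_nonneg _) norm_id_le).trans hπθ
    · rw [← hπ'.fderiv_prodMk_right]
      exact mul_le_mul_of_nonneg_right hπs (norm_nonneg _)
  rw [hstep.fderiv]
  calc _ ≤ Lf * ‖Dg‖ + Lf * (Lθ + Lπ * ‖Dg‖) := by
        refine (norm_comp_prod_le _ _ _).trans (add_le_add ?_ ?_)
        · rw [← hf'.fderiv_prodMk_left]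
          exact mul_le_mul_of_nonneg_right hfs (norm_nonneg _)
        · rw [← hf'.fderiv_prodMk_right]
          exact mul_le_mul hfa haction_le (norm_nonneg _) hLf
    _ = Lf * Lθ + Lf * (1 + Lπ) * ‖Dg‖ := by ring

end RolloutStep

theorem sHat_succ {Θ S A : Type*} (π : Θ × S → A) (f : S × A → S) (s₀ : S) (i : ℕ) :
    sHat π f s₀ (i + 1) = fun θ => f (sHat π f s₀ i θ, π (θ, sHat π f s₀ i θ)) :=
  rfl

/-- **Pathwise state-derivative growth bound.** Under the model rollout setup, every
`ŝ_i : Θ → S` is differentiable with `‖D_θ ŝ_i(θ)‖ ≤ L_f̂ L_θ ∑_{j<i} M^j`,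
`M = L_f̂ (1 + L_π)`; in particular the bound is `0` for `i = 0`. -/
theorem stmt3 {Θ S A : Type*}
    [NormedAddCommGroup Θ] [NormedSpace ℝ Θ]
    [NormedAddCommGroup S] [NormedSpace ℝ S]
    [NormedAddCommGroup A] [NormedSpace ℝ A]
    (π : Θ × S → A) (f : S × A → S) (s₀ : S)
    (Lθ Lπ Lf : ℝ)
    (hπdiff : Differentiable ℝ π)
    (hπθ : ∀ p : Θ × S, ‖fderiv ℝ (fun θ : Θ => π (θ, p.2)) p.1‖ ≤ Lθ)
    (hπs : ∀ p : Θ × S, ‖fderiv ℝ (fun s : S => π (p.1, s)) p.2‖ ≤ Lπ)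
    (hfdiff : Differentiable ℝ f)
    (hfs : ∀ p : S × A, ‖fderiv ℝ (fun s : S => f (s, p.2)) p.1‖ ≤ Lf)
    (hfa : ∀ p : S × A, ‖fderiv ℝ (fun a : A => f (p.1, a)) p.2‖ ≤ Lf) :
    ∀ (i : ℕ) (θ : Θ),
      DifferentiableAt ℝ (sHat π f s₀ i) θ ∧
        ‖fderiv ℝ (sHat π f s₀ i) θ‖ ≤
          Lf * Lθ * ∑ j ∈ Finset.range i, (Lf * (1 + Lπ)) ^ j := by
  have hM : 0 ≤ Lf * (1 + Lπ) := by
    have := (norm_nonneg _).trans (hπs (0, s₀))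
    exact mul_nonneg ((norm_nonneg _).trans (hfs (s₀, π (0, s₀)))) (by linarith)
  intro i
  induction i with
  | zero => simp [sHat]
  | succ i ih =>
    intro θ
    obtain ⟨hdiff, hbound⟩ := ih θ
    obtain ⟨hdiff', hstep⟩ := differentiableAt_and_norm_fderiv_rolloutStep_le hdiff (hπdiff _) (hπθ (θ, _))
      (hπs (θ, _)) (hfdiff _) (hfs (_, _)) (hfa (_, _))
    rw [sHat_succ]
    refine ⟨hdiff', hstep.trans ?_⟩
    calc _ ≤ Lf * Lθ + Lf * (1 + Lπ) * (Lf * Lθ * ∑ j ∈ range i, (Lf * (1 + Lπ)) ^ j) := by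
          gcongr
      _ = _ := by rw [geom_sum_succ]; ring
end

section
/- Under the model rollout setup, for every i ≥ 0 and every θ ∈ Θ, the map â_i : Θ → A is differentiable with ‖D_θ â_i(θ)‖ ≤ L_π · L_f̂ · L_θ · ∑_{j=0}^{i−1} M^j + L_θ, where M = L_f̂ · (1 + L_π); consequently ‖D_θ ŝ_i(θ)‖ + ‖D_θ â_i(θ)‖ ≤ K̂(i), where K̂(i) := (1 + L_π) · L_f̂ · L_θ · ∑_{j=0}^{i−1} M^j + L_θ. -/
open Finset

/-! Differentiating the rollout with the chain rule gives
`‖Dâ_i‖ ≤ L_θ + L_π ‖Dŝ_i‖` and `‖Dŝ_{i+1}‖ ≤ L_f̂ (‖Dŝ_i‖ + ‖Dâ_i‖)`, so `a_i := ‖Dŝ_i‖` satisfies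
`a_0 = 0`, `a_{i+1} ≤ M a_i + L_f̂ L_θ`; unrolling this recursion gives the geometric sums. -/

section ChainRule

variable {X Y Z W : Type*}
  [NormedAddCommGroup X] [NormedSpace ℝ X] [NormedAddCommGroup Y] [NormedSpace ℝ Y]
  [NormedAddCommGroup Z] [NormedSpace ℝ Z] [NormedAddCommGroup W] [NormedSpace ℝ W]

theorem DifferentiableAt.hasFDerivAt_comp_prodMk {F : Y × Z → W} {u : X → Y} {v : X → Z}
    {u' : X →L[ℝ] Y} {v' : X →L[ℝ] Z} {x : X}
    (hF : DifferentiableAt ℝ F (u x, v x)) (hu : HasFDerivAt u u' x) (hv : HasFDerivAt v v' x) :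
    HasFDerivAt (fun x => F (u x, v x))
      ((fderiv ℝ (fun y => F (y, v x)) (u x)).comp u' +
        (fderiv ℝ (fun z => F (u x, z)) (v x)).comp v') x := by
  have hF' := hF.hasFDerivAt
  have h₁ : HasFDerivAt (fun y => F (y, v x)) ((fderiv ℝ F (u x, v x)).comp (.inl ℝ Y Z)) (u x) :=
    hF'.comp (u x) (hasFDerivAt_prodMk_left (u x) (v x))
  have h₂ : HasFDerivAt (fun z => F (u x, z)) ((fderiv ℝ F (u x, v x)).comp (.inr ℝ Y Z)) (v x) :=
    hF'.comp (v x) (hasFDerivAt_prodMk_right (u x) (v x))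
  rw [h₁.fderiv, h₂.fderiv]
  refine (hF'.comp x (hu.prodMk hv)).congr_fderiv (ContinuousLinearMap.ext fun w => ?_)
  exact ((fderiv ℝ F (u x, v x)).comp_inl_add_comp_inr (u' w, v' w)).symm

theorem norm_fderiv_comp_prodMk_le {F : Y × Z → W} {u : X → Y} {v : X → Z} {x : X} {C₁ C₂ : ℝ}
    (hF : DifferentiableAt ℝ F (u x, v x))
    (hu : DifferentiableAt ℝ u x) (hv : DifferentiableAt ℝ v x)
    (h₁ : ‖fderiv ℝ (fun y => F (y, v x)) (u x)‖ ≤ C₁)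
    (h₂ : ‖fderiv ℝ (fun z => F (u x, z)) (v x)‖ ≤ C₂) :
    ‖fderiv ℝ (fun x => F (u x, v x)) x‖ ≤ C₁ * ‖fderiv ℝ u x‖ + C₂ * ‖fderiv ℝ v x‖ := by
  rw [(hF.hasFDerivAt_comp_prodMk hu.hasFDerivAt hv.hasFDerivAt).fderiv]
  calc _ ≤ _ := norm_add_le _ _
    _ ≤ _ := add_le_add (ContinuousLinearMap.opNorm_comp_le _ _)
      (ContinuousLinearMap.opNorm_comp_le _ _)
    _ ≤ _ := by gcongr

end ChainRule

theorem le_mul_geom_sum_of_le_mul_add {a : ℕ → ℝ} {M c : ℝ} (hM : 0 ≤ M) (h₀ : a 0 ≤ 0)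
    (hsucc : ∀ n, a (n + 1) ≤ M * a n + c) (n : ℕ) : a n ≤ c * ∑ j ∈ range n, M ^ j := by
  induction n with
  | zero => simpa using h₀
  | succ n ih =>
    calc a (n + 1) ≤ M * a n + c := hsucc n
      _ ≤ M * (c * ∑ j ∈ range n, M ^ j) + c := by gcongr
      _ = c * ∑ j ∈ range (n + 1), M ^ j := by rw [geom_sum_succ]; ring

section Rollout

variable {Θ S A : Type*} [NormedAddCommGroup Θ] [NormedSpace ℝ Θ]
  [NormedAddCommGroup S] [NormedSpace ℝ S] [NormedAddCommGroup A] [NormedSpace ℝ A]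
  {π : Θ × S → A} {f : S × A → S} {s₀ : S} {Lθ Lπ Lf : ℝ}

theorem differentiable_sHat (hπ : Differentiable ℝ π) (hf : Differentiable ℝ f) :
    ∀ n, Differentiable ℝ (sHat π f s₀ n)
  | 0 => differentiable_const s₀
  | n + 1 =>
    hf.comp ((differentiable_sHat hπ hf n).prodMk
      (hπ.comp (differentiable_id.prodMk (differentiable_sHat hπ hf n))))

theorem differentiable_aHat (hπ : Differentiable ℝ π) (hf : Differentiable ℝ f) (n : ℕ) :
    Differentiable ℝ (aHat π f s₀ n) :=
  hπ.comp (differentiable_id.prodMk (differentiable_sHat hπ hf n))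

theorem norm_fderiv_aHat_le (hπ : Differentiable ℝ π) (hf : Differentiable ℝ f)
    (hπθ : ∀ p : Θ × S, ‖fderiv ℝ (fun θ : Θ => π (θ, p.2)) p.1‖ ≤ Lθ)
    (hπs : ∀ p : Θ × S, ‖fderiv ℝ (fun s : S => π (p.1, s)) p.2‖ ≤ Lπ) (n : ℕ) (θ : Θ) :
    ‖fderiv ℝ (aHat π f s₀ n) θ‖ ≤ Lθ + Lπ * ‖fderiv ℝ (sHat π f s₀ n) θ‖ := by
  set p := (θ, sHat π f s₀ n θ)
  have hLθ : 0 ≤ Lθ := (norm_nonneg _).trans (hπθ p)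
  have hid : ‖fderiv ℝ id θ‖ ≤ 1 := by
    rw [fderiv_id]; exact ContinuousLinearMap.norm_id_le
  calc ‖fderiv ℝ (aHat π f s₀ n) θ‖
      ≤ Lθ * ‖fderiv ℝ id θ‖ + Lπ * ‖fderiv ℝ (sHat π f s₀ n) θ‖ :=
        norm_fderiv_comp_prodMk_le (u := id) (hπ p) differentiableAt_id
          (differentiable_sHat hπ hf n θ) (hπθ p) (hπs p)
    _ ≤ Lθ + Lπ * ‖fderiv ℝ (sHat π f s₀ n) θ‖ := by
        gcongr; exact mul_le_of_le_one_right hLθ hid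

theorem norm_fderiv_sHat_succ_le (hπ : Differentiable ℝ π) (hf : Differentiable ℝ f)
    (hfs : ∀ p : S × A, ‖fderiv ℝ (fun s : S => f (s, p.2)) p.1‖ ≤ Lf)
    (hfa : ∀ p : S × A, ‖fderiv ℝ (fun a : A => f (p.1, a)) p.2‖ ≤ Lf) (n : ℕ) (θ : Θ) :
    ‖fderiv ℝ (sHat π f s₀ (n + 1)) θ‖ ≤
      Lf * ‖fderiv ℝ (sHat π f s₀ n) θ‖ + Lf * ‖fderiv ℝ (aHat π f s₀ n) θ‖ := by
  set p := (sHat π f s₀ n θ, aHat π f s₀ n θ)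
  exact norm_fderiv_comp_prodMk_le (u := sHat π f s₀ n) (v := aHat π f s₀ n) (hf p)
    (differentiable_sHat hπ hf n θ) (differentiable_aHat hπ hf n θ) (hfs p) (hfa p)

theorem norm_fderiv_sHat_le (hπ : Differentiable ℝ π) (hf : Differentiable ℝ f)
    (hπθ : ∀ p : Θ × S, ‖fderiv ℝ (fun θ : Θ => π (θ, p.2)) p.1‖ ≤ Lθ)
    (hπs : ∀ p : Θ × S, ‖fderiv ℝ (fun s : S => π (p.1, s)) p.2‖ ≤ Lπ)
    (hfs : ∀ p : S × A, ‖fderiv ℝ (fun s : S => f (s, p.2)) p.1‖ ≤ Lf)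
    (hfa : ∀ p : S × A, ‖fderiv ℝ (fun a : A => f (p.1, a)) p.2‖ ≤ Lf) (n : ℕ) (θ : Θ) :
    ‖fderiv ℝ (sHat π f s₀ n) θ‖ ≤ Lf * Lθ * ∑ j ∈ range n, (Lf * (1 + Lπ)) ^ j := by
  have hLπ : 0 ≤ Lπ := (norm_nonneg _).trans (hπs (θ, s₀))
  have hLf : 0 ≤ Lf := (norm_nonneg _).trans (hfs (s₀, π (θ, s₀)))
  refine le_mul_geom_sum_of_le_mul_add (a := fun n => ‖fderiv ℝ (sHat π f s₀ n) θ‖)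
    (by positivity) (by simp [sHat]) (fun k => ?_) n
  have hs := norm_fderiv_sHat_succ_le hπ hf hfs hfa k θ (s₀ := s₀)
  have ha := norm_fderiv_aHat_le hπ hf hπθ hπs k θ (s₀ := s₀)
  calc _ ≤ _ := hs
    _ ≤ Lf * ‖fderiv ℝ (sHat π f s₀ k) θ‖ +
        Lf * (Lθ + Lπ * ‖fderiv ℝ (sHat π f s₀ k) θ‖) := by gcongr
    _ = _ := by ring

end Rollout

/-- **Pathwise action-derivative growth bound.** Under the model rollout setup, every
`â_i : Θ → A` is differentiable with
`‖D_θ â_i(θ)‖ ≤ L_π L_f̂ L_θ ∑_{j<i} M^j + L_θ`, `M = L_f̂ (1 + L_π)`; consequently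
`‖D_θ ŝ_i(θ)‖ + ‖D_θ â_i(θ)‖ ≤ K̂(i)`. -/
theorem stmt4 {Θ S A : Type*}
    [NormedAddCommGroup Θ] [NormedSpace ℝ Θ]
    [NormedAddCommGroup S] [NormedSpace ℝ S]
    [NormedAddCommGroup A] [NormedSpace ℝ A]
    (π : Θ × S → A) (f : S × A → S) (s₀ : S)
    (Lθ Lπ Lf : ℝ)
    (hπdiff : Differentiable ℝ π)
    (hπθ : ∀ p : Θ × S, ‖fderiv ℝ (fun θ : Θ => π (θ, p.2)) p.1‖ ≤ Lθ)
    (hπs : ∀ p : Θ × S, ‖fderiv ℝ (fun s : S => π (p.1, s)) p.2‖ ≤ Lπ)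
    (hfdiff : Differentiable ℝ f)
    (hfs : ∀ p : S × A, ‖fderiv ℝ (fun s : S => f (s, p.2)) p.1‖ ≤ Lf)
    (hfa : ∀ p : S × A, ‖fderiv ℝ (fun a : A => f (p.1, a)) p.2‖ ≤ Lf) :
    ∀ (i : ℕ) (θ : Θ),
      DifferentiableAt ℝ (aHat π f s₀ i) θ ∧
        ‖fderiv ℝ (aHat π f s₀ i) θ‖ ≤
          Lπ * Lf * Lθ * ∑ j ∈ Finset.range i, (Lf * (1 + Lπ)) ^ j + Lθ ∧
        ‖fderiv ℝ (sHat π f s₀ i) θ‖ + ‖fderiv ℝ (aHat π f s₀ i) θ‖ ≤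
          Khat Lπ Lf Lθ i := by
  intro i θ
  have hLπ : 0 ≤ Lπ := (norm_nonneg _).trans (hπs (θ, s₀))
  have hs := norm_fderiv_sHat_le hπdiff hfdiff hπθ hπs hfs hfa i θ (s₀ := s₀)
  have ha := norm_fderiv_aHat_le hπdiff hfdiff hπθ hπs i θ (s₀ := s₀)
  refine ⟨differentiable_aHat hπdiff hfdiff i θ, ?_, ?_⟩
  · calc _ ≤ _ := ha
      _ ≤ Lθ + Lπ * (Lf * Lθ * ∑ j ∈ range i, (Lf * (1 + Lπ)) ^ j) := by gcongr
      _ = _ := by ring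
  · calc _ ≤ (1 + Lπ) * ‖fderiv ℝ (sHat π f s₀ i) θ‖ + Lθ := by linarith
      _ ≤ (1 + Lπ) * (Lf * Lθ * ∑ j ∈ range i, (Lf * (1 + Lπ)) ^ j) + Lθ := by gcongr
      _ = Khat Lπ Lf Lθ i := by rw [Khat]; ring
end
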